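/- The space [P_n(ℝ³)]³ of vector-valued polynomials of degree at most n in three variables decomposes as a direct sum [P_n]³ = curl([P_{n+1}]³) ⊕ x·P_{n-1}, where curl([P_{n+1}]³) is the space of curls of vector polynomials of degree at most n+1 and x·P_{n-1} is the space of products of the position vector x with scalar polynomials of degree at most n-1. -/

import Mathlib

open MvPolynomial

noncomputable section

abbrev Poly3 := MvPolynomial (Fin 3) ℝ

/-- `p ∈ P_m(ℝ³)` (total degree at most `m`, with `P_m = {0}` for `m < 0`). -/
def degLE (m : ℤ) (p : Poly3) : Prop := p = 0 ∨ (p.totalDegree : ℤ) ≤ m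

/-- Curl of a vector polynomial. -/
def pcurl (v : Fin 3 → Poly3) : Fin 3 → Poly3 :=
  ![pderiv 1 (v 2) - pderiv 2 (v 1),
    pderiv 2 (v 0) - pderiv 0 (v 2),
    pderiv 0 (v 1) - pderiv 1 (v 0)]

/-- The vector field `x · q = (x₁ q, x₂ q, x₃ q)` for a scalar polynomial `q`. -/
def xmul (q : Poly3) : Fin 3 → Poly3 := fun i => X i * q

/-! Decompose `v` into homogeneous parts. For `v` homogeneous of degree `k`, put
`q = div v / (k + 2)`; Euler's identity `E p = k p` (with `E = ∑ xᵢ ∂ᵢ`) makes `u = v - x q`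
divergence free, and then `curl (x × u) = x div u - (E + 2) u = -(k + 2) u` exhibits `u` as a
curl. Uniqueness: `div` kills curls, while `div (x q) = (3 + E) q` multiplies the coefficient of
`x^m` by `3 + |m|`, so it is injective. -/

namespace MvPolynomial

section CommSemiring

variable {σ R : Type*} [CommSemiring R]

theorem pderiv_eq_zero_of_isHomogeneous_zero {p : MvPolynomial σ R} (h : p.IsHomogeneous 0)
    (i : σ) : pderiv i p = 0 := by
  rw [← totalDegree_zero_iff_isHomogeneous, totalDegree_eq_zero_iff_eq_C] at h
  rw [h, pderiv_C]

theorem sum_homogeneousComponent_of_totalDegree_le {p : MvPolynomial σ R} {n : ℕ}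
    (h : p.totalDegree ≤ n) : ∑ k ∈ Finset.range (n + 1), homogeneousComponent k p = p := by
  rw [← Finset.sum_subset (Finset.range_subset_range.2 (by omega : p.totalDegree + 1 ≤ n + 1)),
    sum_homogeneousComponent]
  intro k _ hk
  exact homogeneousComponent_eq_zero _ _ (by simpa using hk)

variable [Fintype σ]

def euler : Derivation R (MvPolynomial σ R) (MvPolynomial σ R) :=
  ∑ i : σ, (X i : MvPolynomial σ R) • pderiv i

theorem euler_apply (p : MvPolynomial σ R) : euler p = ∑ i, X i * pderiv i p := by
  rw [euler, ← Derivation.coeFnAddMonoidHom_apply, map_sum, Finset.sum_apply]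
  rfl

theorem euler_X (i : σ) : euler (X i : MvPolynomial σ R) = X i := by
  classical simp [euler_apply, pderiv_X, Pi.single_apply]

theorem IsHomogeneous.euler_eq {p : MvPolynomial σ R} {k : ℕ} (h : p.IsHomogeneous k) :
    euler p = k • p := by
  rw [euler_apply, h.sum_X_mul_pderiv]

theorem coeff_euler (p : MvPolynomial σ R) (m : σ →₀ ℕ) :
    coeff m (euler p) = m.degree • coeff m p := by
  induction p using MvPolynomial.induction_on' with
  | monomial d r =>
    classical
    rw [(isHomogeneous_monomial r rfl).euler_eq, coeff_smul, coeff_monomial]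
    split_ifs with h <;> simp [h]
  | add p q hp hq => simp [coeff_add, hp, hq]

theorem IsHomogeneous.euler_pderiv_add_pderiv {p : MvPolynomial σ R} {k : ℕ}
    (h : p.IsHomogeneous k) (i : σ) : euler (pderiv i p) + pderiv i p = k • pderiv i p := by
  cases k with
  | zero => simp [pderiv_eq_zero_of_isHomogeneous_zero h]
  | succ j => rw [(h.pderiv (i := i)).euler_eq, succ_nsmul]; rfl

theorem nsmul_add_euler_injective [IsAddTorsionFree R] {a : ℕ} (ha : a ≠ 0) :
    Function.Injective fun p : MvPolynomial σ R => a • p + euler p := by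
  intro p p' h
  ext m
  have hm := congrArg (coeff m) h
  simp only [coeff_add, coeff_smul, coeff_euler, ← add_smul] at hm
  exact nsmul_right_injective (by omega) hm

end CommSemiring

theorem pderiv_pderiv_comm {σ R : Type*} [CommRing R] (i j : σ) (p : MvPolynomial σ R) :
    pderiv i (pderiv j p) = pderiv j (pderiv i p) := by
  have : ⁅pderiv i, pderiv j⁆ = (0 : Derivation R (MvPolynomial σ R) (MvPolynomial σ R)) :=
    derivation_ext fun k => by
      classical
      rw [Derivation.commutator_apply, pderiv_X, pderiv_X, Pi.single_apply, Pi.single_apply]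
      split_ifs <;> simp
  simpa [Derivation.commutator_apply, sub_eq_zero] using congrArg (· p) this

end MvPolynomial

def degLESubmodule (m : ℤ) : Submodule ℝ Poly3 where
  carrier := {p | degLE m p}
  zero_mem' := Or.inl rfl
  add_mem' := by
    rintro p q hp hq
    obtain rfl | hp := hp
    · rwa [zero_add]
    obtain rfl | hq := hq
    · rw [add_zero]; exact Or.inr hp
    exact Or.inr ((Nat.cast_le.2 (totalDegree_add p q)).trans (by simp [hp, hq]))
  smul_mem' := by
    rintro c p (rfl | hp)
    · exact Or.inl (smul_zero c)
    · exact Or.inr ((Nat.cast_le.2 (totalDegree_smul_le c p)).trans hp)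

theorem degLE_mono {m m' : ℤ} (h : m ≤ m') {p : Poly3} (hp : degLE m p) : degLE m' p :=
  hp.imp_right (·.trans h)

theorem degLE_X_mul {m : ℤ} (i : Fin 3) {p : Poly3} (hp : degLE m p) :
    degLE (m + 1) (X i * p) := by
  obtain rfl | hp := hp
  · exact Or.inl (mul_zero _)
  refine Or.inr ((Nat.cast_le.2 (totalDegree_mul (X i) p)).trans ?_)
  rw [totalDegree_X]
  omega

theorem degLE_of_isHomogeneous {k : ℕ} {p : Poly3} (h : p.IsHomogeneous k) : degLE k p :=
  Or.inr (Nat.cast_le.2 h.totalDegree_le)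

theorem degLE_pderiv_of_isHomogeneous {k : ℕ} {p : Poly3} (h : p.IsHomogeneous k) (i : Fin 3) :
    degLE ((k : ℤ) - 1) (pderiv i p) := by
  cases k with
  | zero => exact Or.inl (pderiv_eq_zero_of_isHomogeneous_zero h i)
  | succ j => simpa using degLE_of_isHomogeneous (h.pderiv (i := i))

theorem totalDegree_le_of_degLE {n : ℕ} {p : Poly3} (h : degLE n p) : p.totalDegree ≤ n := by
  obtain rfl | h := h
  · simp
  · exact_mod_cast h

def pdiv : (Fin 3 → Poly3) →ₗ[ℝ] Poly3 := ∑ i, (pderiv i).toLinearMap ∘ₗ LinearMap.proj i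

theorem pdiv_apply (v : Fin 3 → Poly3) : pdiv v = ∑ i, pderiv i (v i) := by
  simp [pdiv]

def xcross (u : Fin 3 → Poly3) : Fin 3 → Poly3 :=
  ![X 1 * u 2 - X 2 * u 1, X 2 * u 0 - X 0 * u 2, X 0 * u 1 - X 1 * u 0]

theorem pcurl_add (w w' : Fin 3 → Poly3) : pcurl (w + w') = pcurl w + pcurl w' := by
  ext j : 1
  fin_cases j <;>
    simp only [pcurl, Fin.isValue, Pi.add_apply, map_add, Fin.zero_eta, Fin.mk_one,
      Fin.reduceFinMk, Matrix.cons_val_zero, Matrix.cons_val_one, Matrix.cons_val] <;> abel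

theorem pcurl_smul (c : ℝ) (w : Fin 3 → Poly3) : pcurl (c • w) = c • pcurl w := by
  ext j : 1
  fin_cases j <;> simp [pcurl, smul_sub]

theorem pcurl_zero : pcurl 0 = 0 := by
  simpa using pcurl_smul 0 0

theorem xmul_add (q q' : Poly3) : xmul (q + q') = xmul q + xmul q' := by
  ext i : 1
  exact mul_add _ _ _

theorem xmul_zero : xmul 0 = 0 := by
  ext i : 1
  exact mul_zero _

theorem pdiv_pcurl (w : Fin 3 → Poly3) : pdiv (pcurl w) = 0 := by
  simp only [pcurl, pdiv_apply, Fin.sum_univ_three, Matrix.cons_val_zero, Matrix.cons_val_one,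
    Matrix.cons_val, map_sub]
  rw [pderiv_pderiv_comm 0 1, pderiv_pderiv_comm 0 2, pderiv_pderiv_comm 1 2]
  abel

theorem pdiv_xmul (q : Poly3) : pdiv (xmul q) = 3 • q + euler q := by
  simp [pdiv_apply, xmul, euler_apply, Finset.sum_add_distrib, add_comm]

theorem pcurl_xcross (u : Fin 3 → Poly3) (j : Fin 3) :
    pcurl (xcross u) j = X j * pdiv u - 2 • u j - euler (u j) := by
  fin_cases j <;>
  · simp only [pcurl, xcross, pdiv_apply, euler_apply, Fin.sum_univ_three, Fin.isValue,
      Fin.zero_eta, Fin.mk_one, Fin.reduceFinMk, Matrix.cons_val_zero, Matrix.cons_val_one,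
      Matrix.cons_val, map_sub, Derivation.leibniz, smul_eq_mul, pderiv_X, Pi.single_eq_same,
      ne_eq, Fin.reduceEq, zero_ne_one, one_ne_zero, not_false_eq_true, Pi.single_eq_of_ne,
      mul_zero, add_zero, mul_one, nsmul_eq_mul, Nat.cast_ofNat]
    ring

theorem pcurl_xcross_of_pdiv_eq_zero {u : Fin 3 → Poly3} {k : ℝ} (hdiv : pdiv u = 0)
    (heuler : ∀ j, euler (u j) = k • u j) : pcurl (xcross u) = -(k + 2) • u := by
  ext j : 1
  rw [pcurl_xcross, hdiv, heuler, Pi.smul_apply, mul_zero, zero_sub, ← Nat.cast_smul_eq_nsmul ℝ]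
  module

theorem euler_pdiv_add_pdiv {k : ℕ} {v : Fin 3 → Poly3} (hv : ∀ i, (v i).IsHomogeneous k) :
    euler (pdiv v) + pdiv v = (k : ℝ) • pdiv v := by
  simp only [pdiv_apply, map_sum, ← Finset.sum_add_distrib, Finset.smul_sum,
    fun i => (hv i).euler_pderiv_add_pderiv i, Nat.cast_smul_eq_nsmul]

theorem degLE_xcross {m : ℤ} {u : Fin 3 → Poly3} (hu : ∀ j, degLE m (u j)) (j : Fin 3) :
    degLE (m + 1) (xcross u j) := by
  fin_cases j <;> exact (degLESubmodule _).sub_mem (degLE_X_mul _ (hu _)) (degLE_X_mul _ (hu _))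

def decomposable (n : ℕ) : AddSubmonoid (Fin 3 → Poly3) where
  carrier := {v | ∃ w q, (∀ i, degLE ((n : ℤ) + 1) (w i)) ∧ degLE ((n : ℤ) - 1) q ∧
    v = pcurl w + xmul q}
  zero_mem' := ⟨0, 0, fun _ => Or.inl rfl, Or.inl rfl, by rw [pcurl_zero, xmul_zero, add_zero]⟩
  add_mem' := by
    rintro _ _ ⟨w, q, hw, hq, rfl⟩ ⟨w', q', hw', hq', rfl⟩
    refine ⟨w + w', q + q', fun i => (degLESubmodule _).add_mem (hw i) (hw' i),
      (degLESubmodule _).add_mem hq hq', ?_⟩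
    rw [pcurl_add, xmul_add]
    abel

theorem mem_decomposable_of_isHomogeneous {n k : ℕ} (hk : k ≤ n) {v : Fin 3 → Poly3}
    (hv : ∀ i, (v i).IsHomogeneous k) : v ∈ decomposable n := by
  have hk2 : (k : ℝ) + 2 ≠ 0 := by positivity
  set q : Poly3 := ((k : ℝ) + 2)⁻¹ • pdiv v with hq
  set u := v - xmul q with hu
  have hq_deg : degLE ((k : ℤ) - 1) q :=
    (degLESubmodule _).smul_mem _ <| pdiv_apply v ▸
      (degLESubmodule _).sum_mem fun i _ => degLE_pderiv_of_isHomogeneous (hv i) i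
  have hq_euler : euler q + q = (k : ℝ) • q := by
    rw [hq, Derivation.map_smul, ← smul_add, euler_pdiv_add_pdiv hv, smul_comm]
  have hu_div : pdiv u = 0 := by
    have hv_q : pdiv v = ((k : ℝ) + 2) • q := by rw [hq, smul_smul, mul_inv_cancel₀ hk2, one_smul]
    rw [map_sub, pdiv_xmul]
    linear_combination (norm := module) hv_q - hq_euler
  have hu_euler : ∀ j, euler (u j) = (k : ℝ) • u j := by
    intro j
    rw [hu, Pi.sub_apply, xmul, map_sub, Derivation.leibniz, euler_X, (hv j).euler_eq,
      ← Nat.cast_smul_eq_nsmul ℝ]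
    simp only [smul_eq_C_mul, smul_eq_mul] at hq_euler ⊢
    linear_combination -X j * hq_euler
  have hu_deg : ∀ j, degLE k (u j) := fun j =>
    (degLESubmodule _).sub_mem (degLE_of_isHomogeneous (hv j))
      (show degLE k (X j * q) by simpa using degLE_X_mul j hq_deg)
  refine ⟨(-((k : ℝ) + 2))⁻¹ • xcross u, q,
    fun j => degLE_mono (by omega) ((degLESubmodule _).smul_mem _ (degLE_xcross hu_deg j)),
    degLE_mono (by omega) hq_deg, ?_⟩
  rw [pcurl_smul, pcurl_xcross_of_pdiv_eq_zero hu_div hu_euler, smul_smul,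
    inv_mul_cancel₀ (neg_ne_zero.2 hk2), one_smul, hu, sub_add_cancel]

theorem mem_decomposable {n : ℕ} {v : Fin 3 → Poly3} (hv : ∀ i, degLE n (v i)) :
    v ∈ decomposable n := by
  have hsum : ∑ k ∈ Finset.range (n + 1), (fun i => homogeneousComponent k (v i)) = v := by
    ext i : 1
    rw [Finset.sum_apply]
    exact sum_homogeneousComponent_of_totalDegree_le (totalDegree_le_of_degLE (hv i))
  rw [← hsum]
  exact sum_mem fun k hk => mem_decomposable_of_isHomogeneous
    (Nat.lt_succ_iff.1 (Finset.mem_range.1 hk)) fun i => homogeneousComponent_isHomogeneous k _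

theorem eq_of_pcurl_add_xmul_eq {w w' : Fin 3 → Poly3} {q q' : Poly3}
    (h : pcurl w + xmul q = pcurl w' + xmul q') : q = q' := by
  have hdiv := congrArg pdiv h
  simp only [map_add, pdiv_pcurl, pdiv_xmul, zero_add] at hdiv
  exact nsmul_add_euler_injective three_ne_zero hdiv

/-- `[P_n(ℝ³)]³ = curl([P_{n+1}]³) ⊕ x · P_{n-1}`: every vector polynomial of degree
at most `n` decomposes uniquely as a sum of a curl of a vector polynomial of degree
at most `n+1` and `x` times a scalar polynomial of degree at most `n-1`. -/
theorem poly_decomposition_curl_x (n : ℕ) (v : Fin 3 → Poly3)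
    (hv : ∀ i, degLE (n : ℤ) (v i)) :
    ∃! gc : (Fin 3 → Poly3) × (Fin 3 → Poly3),
      (∃ w : Fin 3 → Poly3, (∀ i, degLE ((n : ℤ) + 1) (w i)) ∧ gc.1 = pcurl w) ∧
      (∃ q : Poly3, degLE ((n : ℤ) - 1) q ∧ gc.2 = xmul q) ∧
      v = gc.1 + gc.2 := by
  obtain ⟨w, q, hw, hq, rfl⟩ := mem_decomposable hv
  refine ⟨(pcurl w, xmul q), ⟨⟨w, hw, rfl⟩, ⟨q, hq, rfl⟩, rfl⟩, ?_⟩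
  rintro ⟨_, _⟩ ⟨⟨w', -, rfl⟩, ⟨q', -, rfl⟩, h⟩
  obtain rfl := eq_of_pcurl_add_xmul_eq h.symm
  rw [add_right_cancel h]
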